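/- Let m ≥ 1 and n = 2^m. Let I be a nonempty finite index set, and for each i ∈ I let l_i be an integer with 0 ≤ l_i ≤ m and a_i an integer with 0 ≤ a_i < 2^{l_i}, and let C_i = {g ∈ ZMod n : some (equivalently, every) integer lift of g is congruent to a_i modulo 2^{l_i}}. Assume the sets C_i are pairwise disjoint. Fix i* ∈ I and set w = |{ν₂(a_{i*} − a_i) : i ∈ I, i ≠ i*}|. Then there exists G : ZMod n → ℂ whose support has cardinality exactly 2^w and whose discrete Fourier transform satisfies Ĝ(g) = 1 for every g ∈ C_{i*} and Ĝ(g) = 0 for every g ∈ ⋃_{i ∈ I, i ≠ i*} C_i. -/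

import Mathlib

/-!
Write `ψ x = exp (2πi x / 2^m)`, `S = {ν₂(a_{i*} - a_i) : i ≠ i*}` and `σ_T = ∑_{v ∈ T} 2^(m-1-v)`
for `T ⊆ S`. The function `G = 2^(-|S|) ∑_{T ⊆ S} ψ(-a_{i*} σ_T) δ_{-σ_T}` has transform
`Ĝ(g) = ∏_{v ∈ S} (1 + ψ((g - a_{i*}) 2^(m-1-v))) / 2`, and its support has `2^|S|` points because
the `σ_T` are distinct binary expansions below `2^m`. Disjointness of the classes forces
`v = ν₂(a_{i*} - a_i) < min l_i l_{i*}`. Hence on `C_{i*}` every factor is `1`, while on `C_i` the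
difference `g - a_{i*}` has valuation exactly `v`, so the factor at `v` is `(1 + (-1)) / 2 = 0`.
-/

open scoped BigOperators

/-- The one-dimensional discrete Fourier transform on `ZMod n`. -/
noncomputable def dft1 (n : ℕ) [NeZero n] (x : ZMod n → ℂ) : ZMod n → ℂ :=
  fun f => ∑ t : ZMod n, x t *
    Complex.exp (-(2 * (Real.pi : ℂ) * Complex.I) * (((f * t : ZMod n)).val : ℂ) / (n : ℂ))

open Finset ZMod

lemma AddChar.map_sum_eq_prod {A M ι : Type*} [AddCommMonoid A] [CommMonoid M] (ψ : AddChar A M)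
    (s : Finset ι) (x : ι → A) : ψ (∑ i ∈ s, x i) = ∏ i ∈ s, ψ (x i) := by
  classical
  induction s using Finset.induction_on with
  | empty => simp
  | insert i s hi ih => rw [sum_insert hi, map_add_eq_mul, prod_insert hi, ih]

lemma Finset.support_sum_pi_single {β γ M : Type*} [DecidableEq γ] [AddCommMonoid M]
    {P : Finset β} {e : β → γ} {c : β → M} (he : Set.InjOn e P) (hc : ∀ b ∈ P, c b ≠ 0) :
    Function.support (∑ b ∈ P, Pi.single (e b) (c b)) = e '' P := by
  ext t
  simp only [Function.mem_support, Finset.sum_apply, Set.mem_image, Finset.mem_coe]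
  constructor
  · intro ht
    by_contra! hne
    exact ht (sum_eq_zero fun b hb => Pi.single_eq_of_ne (hne b hb).symm _)
  · rintro ⟨b, hb, rfl⟩
    rw [sum_eq_single_of_mem b hb fun b' hb' hne => Pi.single_eq_of_ne (he.ne hb hb' hne.symm) _,
      Pi.single_eq_same]
    exact hc b hb

lemma padicValInt_lt_of_not_pow_dvd {p : ℕ} [Fact p.Prime] {x : ℤ} {k : ℕ}
    (h : ¬ (p : ℤ) ^ k ∣ x) : padicValInt p x < k := by
  by_contra! hk
  exact h ((padicValInt_dvd_iff k x).2 (Or.inr hk))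

lemma pow_padicValInt_dvd_sub_of_not_pow_dvd {p : ℕ} [Fact p.Prime] {y z : ℤ} {k : ℕ}
    (hy : (p : ℤ) ^ k ∣ y) (hz : ¬ (p : ℤ) ^ k ∣ z) :
    (p : ℤ) ^ padicValInt p z ∣ y - z ∧ ¬ (p : ℤ) ^ (padicValInt p z + 1) ∣ y - z := by
  have hyv : (p : ℤ) ^ (padicValInt p z + 1) ∣ y :=
    (pow_dvd_pow _ (padicValInt_lt_of_not_pow_dvd hz)).trans hy
  have hz0 : z ≠ 0 := by
    rintro rfl
    exact hz (dvd_zero _)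
  refine ⟨dvd_sub ((pow_dvd_pow _ (Nat.le_succ _)).trans hyv) (padicValInt_dvd z), ?_⟩
  rw [dvd_sub_right hyv, padicValInt_dvd_iff]
  simp [hz0]

section Fourier

variable {n : ℕ} [NeZero n]

lemma dft1_eq_sum_stdAddChar (x : ZMod n → ℂ) (f : ZMod n) :
    dft1 n x f = ∑ t, x t * stdAddChar (-(f * t)) := by
  refine sum_congr rfl fun t _ => ?_
  rw [AddChar.map_neg_eq_inv, stdAddChar_apply, toCircle_apply, ← Complex.exp_neg]
  ring_nf

lemma dft1_sum {β : Type*} (P : Finset β) (x : β → ZMod n → ℂ) (f : ZMod n) :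
    dft1 n (∑ b ∈ P, x b) f = ∑ b ∈ P, dft1 n (x b) f := by
  simp only [dft1_eq_sum_stdAddChar, Finset.sum_apply, sum_mul]
  exact sum_comm

lemma dft1_single (s : ZMod n) (c : ℂ) (f : ZMod n) :
    dft1 n (Pi.single s c) f = c * stdAddChar (-(f * s)) := by
  rw [dft1_eq_sum_stdAddChar, Fintype.sum_eq_single s fun t ht => by simp [Pi.single_eq_of_ne ht],
    Pi.single_eq_same]

variable {α : Type*}

noncomputable def subsetSumKernel (S : Finset α) (u : α → ZMod n) (a : ZMod n) : ZMod n → ℂ :=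
  ∑ T ∈ S.powerset,
    Pi.single (-∑ v ∈ T, u v) ((2 ^ #S : ℂ)⁻¹ * stdAddChar (-(a * ∑ v ∈ T, u v)))

lemma dft1_subsetSumKernel (S : Finset α) (u : α → ZMod n) (a g : ZMod n) :
    dft1 n (subsetSumKernel S u a) g = ∏ v ∈ S, (1 + stdAddChar ((g - a) * u v)) / 2 := by
  rw [prod_div_distrib, prod_const, prod_one_add, sum_div, subsetSumKernel, dft1_sum]
  refine sum_congr rfl fun T _ => ?_
  rw [dft1_single, ← AddChar.map_sum_eq_prod, ← mul_sum, mul_right_comm, mul_assoc,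
    ← AddChar.map_add_eq_mul, div_eq_inv_mul]
  congr 2
  ring

lemma ncard_support_subsetSumKernel {S : Finset α} {u : α → ZMod n}
    (hu : Set.InjOn (fun T => ∑ v ∈ T, u v) S.powerset) (a : ZMod n) :
    (Function.support (subsetSumKernel S u a)).ncard = 2 ^ #S := by
  classical
  have he : Set.InjOn (fun T => -∑ v ∈ T, u v) S.powerset :=
    fun T hT T' hT' h => hu hT hT' (neg_inj.mp h)
  rw [subsetSumKernel, support_sum_pi_single he fun T _ => by simp [stdAddChar_apply],
    he.ncard_image, Set.ncard_coe_finset, card_powerset]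

end Fourier

section TwoPowerModulus

open Complex Real

lemma stdAddChar_intCast_mul_eq_exp {N d k : ℕ} [NeZero N] (hN : N = d * k) (x : ℤ) :
    stdAddChar ((x : ZMod N) * (k : ZMod N)) = exp (2 * π * I * x / d) := by
  have hk : (k : ℂ) ≠ 0 := by
    have := NeZero.ne N
    exact_mod_cast right_ne_zero_of_mul (hN ▸ this)
  rw [← Int.cast_natCast (R := ZMod N) k, ← Int.cast_mul, stdAddChar_coe, hN]
  congr 1
  push_cast
  field_simp

variable {m v : ℕ}

lemma two_pow_eq_two_pow_mul (hv : v < m) : 2 ^ m = 2 ^ (v + 1) * 2 ^ (m - 1 - v) := by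
  rw [← pow_add]
  congr 1
  omega

lemma stdAddChar_sub_mul_two_pow_eq_exp (hv : v < m) (g : ZMod (2 ^ m)) (a : ℤ) :
    stdAddChar ((g - (a : ZMod (2 ^ m))) * 2 ^ (m - 1 - v)) =
      exp (2 * π * I * ((g.val - a : ℤ) : ℂ) / 2 ^ (v + 1)) := by
  have hg : g - (a : ZMod (2 ^ m)) = ((g.val - a : ℤ) : ZMod (2 ^ m)) := by simp
  rw [hg]
  simpa using stdAddChar_intCast_mul_eq_exp (two_pow_eq_two_pow_mul hv) (g.val - a)

lemma stdAddChar_sub_mul_two_pow_of_dvd (hv : v < m) {g : ZMod (2 ^ m)} {a : ℤ}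
    (h : 2 ^ (v + 1) ∣ (g.val : ℤ) - a) : stdAddChar ((g - (a : ZMod (2 ^ m))) * 2 ^ (m - 1 - v)) = 1 := by
  rw [stdAddChar_sub_mul_two_pow_eq_exp hv, Complex.exp_eq_one_iff]
  obtain ⟨q, hq⟩ := h
  exact ⟨q, by rw [hq]; push_cast; field_simp⟩

lemma stdAddChar_sub_mul_two_pow_of_not_dvd (hv : v < m) {g : ZMod (2 ^ m)} {a : ℤ}
    (h : 2 ^ v ∣ (g.val : ℤ) - a) (h' : ¬ 2 ^ (v + 1) ∣ (g.val : ℤ) - a) :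
    stdAddChar ((g - (a : ZMod (2 ^ m))) * 2 ^ (m - 1 - v)) = -1 := by
  obtain ⟨q, hq⟩ := h
  have hodd : Odd q := by
    rw [← Int.not_even_iff_odd]
    rintro ⟨r, rfl⟩
    exact h' ⟨r, by rw [hq]; ring⟩
  rw [stdAddChar_sub_mul_two_pow_eq_exp hv, hq, Int.cast_mul, Int.cast_pow, Int.cast_ofNat,
    show 2 * π * I * (2 ^ v * q) / 2 ^ (v + 1) = q * (π * I) by field_simp; ring,
    exp_int_mul, exp_pi_mul_I, hodd.neg_one_zpow]

lemma injOn_sum_two_pow_sub {S : Finset ℕ} (hS : ∀ v ∈ S, v < m) :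
    Set.InjOn (fun T => ∑ v ∈ T, (2 : ZMod (2 ^ m)) ^ (m - 1 - v)) S.powerset := by
  have hr : Set.InjOn (fun v => m - 1 - v) S := fun v hv v' hv' h => by
    have := hS v hv
    have := hS v' hv'
    simp only at h
    omega
  have hsum (T : Finset ℕ) (hT : T ⊆ S) :
      ∑ v ∈ T, (2 : ZMod (2 ^ m)) ^ (m - 1 - v) = ((∑ j ∈ T.image (m - 1 - ·), 2 ^ j : ℕ) : _) := by
    rw [sum_image (hr.mono hT)]
    push_cast
    rfl
  have hlt (T : Finset ℕ) (hT : T ⊆ S) : ∑ j ∈ T.image (m - 1 - ·), 2 ^ j < 2 ^ m :=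
    Nat.geomSum_lt le_rfl fun j hj => by
      obtain ⟨v, hv, rfl⟩ := mem_image.mp hj
      have := hS v (hT hv)
      omega
  intro T hT T' hT' h
  simp only [mem_coe, mem_powerset] at hT hT'
  simp only [hsum T hT, hsum T' hT', natCast_eq_natCast_iff', Nat.mod_eq_of_lt (hlt T hT),
    Nat.mod_eq_of_lt (hlt T' hT')] at h
  exact image_injOn_powerset_of_injOn hr (by simpa using hT) (by simpa using hT')
    (geomSum_injective le_rfl h)

end TwoPowerModulus

section ResidueClass

def residueClass (m l : ℕ) (a : ℤ) : Set (ZMod (2 ^ m)) := {g | (g.val : ℤ) % 2 ^ l = a}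

variable {m l : ℕ} {a : ℤ}

lemma mem_residueClass_iff (ha0 : 0 ≤ a) (ha : a < 2 ^ l) {g : ZMod (2 ^ m)} :
    g ∈ residueClass m l a ↔ 2 ^ l ∣ (g.val : ℤ) - a := by
  have hamod : a % 2 ^ l = a := Int.emod_eq_of_lt ha0 ha
  constructor
  · intro hg
    exact Int.ModEq.dvd (Int.ModEq.symm (hg.trans hamod.symm))
  · intro hg
    exact Eq.trans (Int.modEq_of_dvd hg).symm hamod

lemma intCast_mem_residueClass (ha0 : 0 ≤ a) (ha : a < 2 ^ l) {b : ℤ} (hb0 : 0 ≤ b)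
    (hb : b < 2 ^ m) (hab : 2 ^ l ∣ b - a) : (b : ZMod (2 ^ m)) ∈ residueClass m l a := by
  rwa [mem_residueClass_iff ha0 ha, val_intCast, Int.emod_eq_of_lt hb0 (mod_cast hb)]

lemma not_dvd_sub_of_disjoint_residueClass {l' : ℕ} {a' : ℤ} (hl' : l' ≤ m)
    (ha0 : 0 ≤ a) (ha : a < 2 ^ l) (ha0' : 0 ≤ a') (ha' : a' < 2 ^ l')
    (hdisj : Disjoint (residueClass m l a) (residueClass m l' a')) : ¬ 2 ^ l ∣ a - a' := by
  intro h
  have ha'm : a' < 2 ^ m := ha'.trans_le (pow_le_pow_right₀ one_le_two hl')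
  exact Set.disjoint_left.mp hdisj (intCast_mem_residueClass ha0 ha ha0' ha'm (dvd_sub_comm.mp h))
    (intCast_mem_residueClass ha0' ha' ha0' ha'm (by simp))

lemma stdAddChar_sub_mul_two_pow_of_mem_residueClass (hl : l ≤ m) (ha0 : 0 ≤ a) (ha : a < 2 ^ l)
    {g : ZMod (2 ^ m)} (hg : g ∈ residueClass m l a) {v : ℕ} (hv : v < l) :
    stdAddChar ((g - (a : ZMod (2 ^ m))) * 2 ^ (m - 1 - v)) = 1 :=
  stdAddChar_sub_mul_two_pow_of_dvd (hv.trans_le hl)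
    ((pow_dvd_pow 2 hv).trans ((mem_residueClass_iff ha0 ha).1 hg))

lemma stdAddChar_sub_mul_two_pow_padicValInt_of_mem_residueClass (hl : l ≤ m) (ha0 : 0 ≤ a)
    (ha : a < 2 ^ l) {g : ZMod (2 ^ m)} (hg : g ∈ residueClass m l a) {b : ℤ}
    (hb : ¬ 2 ^ l ∣ b - a) :
    stdAddChar ((g - (b : ZMod (2 ^ m))) * 2 ^ (m - 1 - padicValInt 2 (b - a))) = -1 := by
  obtain ⟨hdvd, hndvd⟩ := pow_padicValInt_dvd_sub_of_not_pow_dvd (p := 2)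
    (by simpa using (mem_residueClass_iff ha0 ha).1 hg) (by simpa using hb)
  rw [sub_sub_sub_cancel_right] at hdvd hndvd
  exact stdAddChar_sub_mul_two_pow_of_not_dvd
    ((padicValInt_lt_of_not_pow_dvd (by simpa using hb)).trans_le hl) (by simpa using hdvd)
    (by simpa using hndvd)

end ResidueClass

theorem stmt2 (m : ℕ) (n : ℕ) (hn : n = 2 ^ m) [NeZero n]
    {ι : Type} [Fintype ι] [DecidableEq ι]
    (l : ι → ℕ) (hl : ∀ i, l i ≤ m)
    (a : ι → ℤ) (ha0 : ∀ i, 0 ≤ a i) (ha : ∀ i, a i < 2 ^ l i)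
    (C : ι → Set (ZMod n))
    (hC : ∀ i, C i = {g : ZMod n | ((g.val : ℤ)) % 2 ^ l i = a i})
    (hdisj : Pairwise (fun i j => Disjoint (C i) (C j)))
    (istar : ι)
    (w : ℕ)
    (hw : w = ((Finset.univ.erase istar).image
      (fun i => padicValInt 2 (a istar - a i))).card) :
    ∃ G : ZMod n → ℂ,
      (Function.support G).ncard = 2 ^ w ∧
      (∀ g ∈ C istar, dft1 n G g = 1) ∧
      (∀ i, i ≠ istar → ∀ g ∈ C i, dft1 n G g = 0) := by
  subst hn
  have hC' : ∀ i, C i = residueClass m (l i) (a i) := hC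
  have hsep (i) (hi : i ≠ istar) : ¬ 2 ^ l istar ∣ a istar - a i ∧ ¬ 2 ^ l i ∣ a istar - a i := by
    have hd : Disjoint (residueClass m (l istar) (a istar)) (residueClass m (l i) (a i)) :=
      hC' istar ▸ hC' i ▸ hdisj hi.symm
    refine ⟨not_dvd_sub_of_disjoint_residueClass (hl i) (ha0 istar) (ha istar) (ha0 i) (ha i) hd, ?_⟩
    rw [dvd_sub_comm]
    exact not_dvd_sub_of_disjoint_residueClass (hl istar) (ha0 i) (ha i) (ha0 istar) (ha istar) hd.symm
  set S := (univ.erase istar).image fun i => padicValInt 2 (a istar - a i)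
  have hS : ∀ v ∈ S, v < l istar := by
    simp only [S, mem_image, mem_erase]
    rintro _ ⟨i, ⟨hi, -⟩, rfl⟩
    exact padicValInt_lt_of_not_pow_dvd (by simpa using (hsep i hi).1)
  refine ⟨subsetSumKernel S (fun v => 2 ^ (m - 1 - v)) (a istar), ?_, fun g hg => ?_,
    fun i hi g hg => ?_⟩
  · rw [hw, ncard_support_subsetSumKernel
      (injOn_sum_two_pow_sub fun v hv => (hS v hv).trans_le (hl istar))]
  · rw [dft1_subsetSumKernel]
    refine prod_eq_one fun v hv => ?_
    rw [stdAddChar_sub_mul_two_pow_of_mem_residueClass (hl istar) (ha0 istar) (ha istar)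
      (hC' istar ▸ hg) (hS v hv)]
    norm_num
  · rw [dft1_subsetSumKernel]
    refine prod_eq_zero (mem_image_of_mem _ (mem_erase.2 ⟨hi, mem_univ i⟩)) ?_
    rw [stdAddChar_sub_mul_two_pow_padicValInt_of_mem_residueClass (hl i) (ha0 i) (ha i)
      (hC' i ▸ hg) (hsep i hi).2]
    norm_num
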